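/- arXiv:2103.10874 — 4 statements merged into one kernel-verified Lean document; each statement's English description precedes it below -/
import Mathlib

section
/- With P defined by p_{ij} = ρ(x_j − x_i) (ρ(0)=v, ρ(x)=φ(x) for x≠0), for each a ∈ F_{r^m} the vector η_a is an eigenvector of P P^T with eigenvalue λ_a = v² + (1 + φ(−1)) v g(φ,χ_a) + φ(−1) (g(φ,χ_a))², and these λ_a over all a ∈ F_{r^m} give all eigenvalues of P P^T. -/
/-!
Write `ψ` for the additive character `t ↦ ζ ^ Tr(t)` of `K`, so that `η a = ψ (a * ·)`. The matrix
`P` is the transpose of the circulant matrix of `ρ` over the group `(K, +)`, and circulant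
matrices act on additive characters by scalars: `P η_a = (v + g a) η_a` and
`Pᵀ η_a = (v + φ(-1) g a) η_a`, the sign coming from `x ↦ -x` in the Gauss sum. Since `ψ` is
primitive, the orthogonality relations show that the matrix with columns `η_a` is invertible
as soon as `#K = r ^ m` is nonzero in `E`, i.e. `p ∤ r`. So `P Pᵀ` is diagonalised by it, and
its characteristic polynomial is `∏ₐ (X - λ_a)`.
-/

open Finset Polynomial Matrix

namespace AddChar

variable {G R : Type*} [AddCommGroup G] [Fintype G] [CommRing R]

theorem circulant_mulVec (f : G → R) (ψ : AddChar G R) :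
    circulant f *ᵥ ⇑ψ = (∑ x, f x * ψ⁻¹ x) • ⇑ψ := by
  funext i
  simp only [mulVec, dotProduct, circulant_apply, Pi.smul_apply, smul_eq_mul, sum_mul]
  refine Fintype.sum_equiv (Equiv.subLeft i) _ _ fun j => ?_
  rw [Equiv.subLeft_apply, inv_apply, mul_assoc, ← map_add_eq_mul, neg_sub, sub_add_cancel]

theorem circulant_transpose_mulVec (f : G → R) (ψ : AddChar G R) :
    (circulant f)ᵀ *ᵥ ⇑ψ = (∑ x, f x * ψ x) • ⇑ψ := by
  rw [transpose_circulant, circulant_mulVec]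
  congr 1
  exact Fintype.sum_equiv (Equiv.neg G) _ _ fun x => by simp [inv_apply]

end AddChar

theorem MulChar.sum_ite_zero_mul_eq_add_gaussSum {R R' : Type*} [CommRing R] [Nontrivial R]
    [Fintype R] [DecidableEq R] [CommRing R'] (χ : MulChar R R') (ψ : AddChar R R') (c : R') :
    ∑ x, (if x = 0 then c else χ x) * ψ x = c + gaussSum χ ψ := by
  have hsplit : ∀ x, (if x = 0 then c else χ x) = (if x = 0 then c else 0) + χ x := fun x => by
    split_ifs with hx <;> simp [hx]
  simp only [hsplit, add_mul, sum_add_distrib, ite_mul, zero_mul, sum_ite_eq', mem_univ,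
    if_true, AddChar.map_zero_eq_one, mul_one, gaussSum]

theorem gaussSum_inv_eq_mul_gaussSum {F R' : Type*} [Field F] [Fintype F] [CommRing R']
    (χ : MulChar F R') (ψ : AddChar F R') : gaussSum χ ψ⁻¹ = χ (-1) * gaussSum χ ψ := by
  rw [← mul_gaussSum_inv_eq_gaussSum χ ψ, ← mul_assoc, ← map_mul, neg_one_mul, neg_neg,
    map_one, one_mul]

theorem Matrix.charpoly_eq_prod_of_mulVec_eq_smul {n R : Type*} [Fintype n] [DecidableEq n]
    [CommRing R] {A : Matrix n n R} {u : n → n → R} (hu : IsUnit (of fun i j => u j i))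
    {d : n → R} (h : ∀ j, A *ᵥ u j = d j • u j) : A.charpoly = ∏ j, (X - C (d j)) := by
  obtain ⟨U, hU⟩ := hu
  have hdiag : (↑U⁻¹ : Matrix n n R) * A * U = diagonal d := by
    have hAU : A * U = U * diagonal d := by
      ext i j
      rw [hU, mul_diagonal, of_apply, mul_comm]
      exact congr_fun (h j) i
    rw [Matrix.mul_assoc, hAU, ← Matrix.mul_assoc, Units.inv_mul, Matrix.one_mul]
  rw [← charpoly_diagonal, ← hdiag, Matrix.mul_assoc, charpoly_mul_comm, Matrix.mul_assoc,
    Units.mul_inv, Matrix.mul_one]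

theorem AddChar.IsPrimitive.isUnit_of_mul {R R' : Type*} [CommRing R] [Fintype R]
    [DecidableEq R] [Field R'] {ψ : AddChar R R'} (hψ : ψ.IsPrimitive)
    (hcard : (Fintype.card R : R') ≠ 0) : IsUnit (of fun x a => ψ (a * x)) := by
  have horth : (of fun a x => ψ (-(a * x))) * (of fun x a => ψ (a * x)) =
      (Fintype.card R : R') • (1 : Matrix R R R') := by
    ext a b
    have hsum : ∀ x, ψ (-(a * x)) * ψ (b * x) = ψ (x * (b - a)) := fun x => by
      rw [← map_add_eq_mul]
      ring_nf
    rw [Matrix.mul_apply]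
    simp only [of_apply, hsum]
    rw [sum_mulShift _ hψ, Matrix.smul_apply, Matrix.one_apply]
    obtain rfl | hab := eq_or_ne a b
    · simp
    · simp [hab, sub_eq_zero, hab.symm]
  refine (isUnit_iff_isUnit_det _).mpr
    (isUnit_det_of_left_inverse (B := (Fintype.card R : R')⁻¹ • of fun a x => ψ (-(a * x))) ?_)
  rw [Matrix.smul_mul, horth, smul_smul, inv_mul_cancel₀ hcard, one_smul]

theorem AddChar.isPrimitive_zmodChar_comp_trace {r : ℕ} [Fact r.Prime] {K C : Type*} [Field K]
    [Finite K] [Algebra (ZMod r) K] [CommMonoid C] {ζ : C} (hζ : IsPrimitiveRoot ζ r) :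
    ((zmodChar r hζ.pow_eq_one).compAddMonoidHom
      (Algebra.trace (ZMod r) K).toAddMonoidHom).IsPrimitive := by
  refine IsPrimitive.of_ne_one (ne_one_iff.mpr ?_)
  obtain ⟨b, hb⟩ := Algebra.trace_surjective (ZMod r) K 1
  refine ⟨b, fun h => one_ne_zero (?_ : (1 : ZMod r) = 0)⟩
  rw [← hb]
  exact ((zmodChar_primitive_of_primitive_root r hζ).zmod_char_eq_one_iff r _).mp h

theorem CharP.natCast_pow_ne_zero_of_coprime {E : Type*} [AddMonoidWithOne E] {p q r : ℕ}
    [CharP E p] (hp : p.Prime) (hpq : p ∣ q) (hqr : q.Coprime r) (m : ℕ) :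
    ((r ^ m : ℕ) : E) ≠ 0 := by
  rw [Ne, CharP.cast_eq_zero_iff E p]
  intro hdvd
  exact hp.one_lt.ne' (Nat.eq_one_of_dvd_coprimes hqr hpq (hp.dvd_of_dvd_pow hdvd))

theorem eigenvalues_PPT_general {r m p n q : ℕ} [Fact r.Prime] (hp : p.Prime)
    (hn : 0 < n) (hq : q = p ^ n) (hqr : Nat.Coprime q r)
    {K E : Type*} [Field K] [Fintype K] [DecidableEq K] [Algebra (ZMod r) K]
    (hK : Fintype.card K = r ^ m)
    [Field E] [CharP E p]
    (ζ : E) (hζ : IsPrimitiveRoot ζ r)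
    (φ : MulChar K E) (v : E) :
    let ρ : K → E := fun y => if y = 0 then v else φ y
    let P : Matrix K K E := Matrix.of fun i j => ρ (j - i)
    let η : K → K → E := fun a x => ζ ^ (Algebra.trace (ZMod r) K (a * x)).val
    let g : K → E := fun a => ∑ x ∈ univ \ {0}, φ x * ζ ^ (Algebra.trace (ZMod r) K (a * x)).val
    let lam : K → E := fun a => v ^ 2 + (1 + φ (-1)) * v * g a + φ (-1) * (g a) ^ 2
    (∀ a : K, (P * P.transpose).mulVec (η a) = lam a • η a) ∧
      (∀ μ : E, (P * P.transpose).charpoly.IsRoot μ → ∃ a : K, μ = lam a) := by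
  intro ρ P η g lam
  set ψ := (AddChar.zmodChar r hζ.pow_eq_one).compAddMonoidHom
    (Algebra.trace (ZMod r) K).toAddMonoidHom
  have hη : ∀ a, η a = ψ.mulShift a := fun a => rfl
  have hg : ∀ a, g a = gaussSum φ (ψ.mulShift a) := fun a =>
    sum_subset (subset_univ _) fun x _ hx => by simp_all [MulChar.map_zero]
  have hP : P = (circulant ρ)ᵀ := rfl
  have hPη : ∀ a, P *ᵥ η a = (v + g a) • η a := fun a => by
    rw [hη, hP, AddChar.circulant_transpose_mulVec, MulChar.sum_ite_zero_mul_eq_add_gaussSum, hg]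
  have hPTη : ∀ a, Pᵀ *ᵥ η a = (v + φ (-1) * g a) • η a := fun a => by
    rw [hη, hP, transpose_transpose, AddChar.circulant_mulVec,
      MulChar.sum_ite_zero_mul_eq_add_gaussSum, gaussSum_inv_eq_mul_gaussSum, hg]
  have heig : ∀ a, (P * Pᵀ) *ᵥ η a = lam a • η a := fun a => by
    rw [← mulVec_mulVec, hPTη, mulVec_smul, hPη, smul_smul]
    congr 1
    ring
  refine ⟨heig, fun μ hμ => ?_⟩
  have hunit : IsUnit (of fun x a => η a x) :=
    (AddChar.isPrimitive_zmodChar_comp_trace hζ).isUnit_of_mul <| by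
      rw [hK]
      exact CharP.natCast_pow_ne_zero_of_coprime hp (hq ▸ dvd_pow_self p hn.ne') hqr m
  rw [charpoly_eq_prod_of_mulVec_eq_smul hunit heig, IsRoot, eval_prod, prod_eq_zero_iff] at hμ
  obtain ⟨a, -, ha⟩ := hμ
  exact ⟨a, sub_eq_zero.mp (by simpa using ha)⟩

/-- each `η_a` is an eigenvector of `P * Pᵀ` with eigenvalue
`λ_a = v² + (1 + φ(-1)) v g(φ,χ_a) + φ(-1) g(φ,χ_a)²`, and the `λ_a` for `a ∈ K`
exhaust all eigenvalues (roots of the characteristic polynomial) of `P * Pᵀ`. -/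
theorem eigenvalues_PPT {r m p n q : ℕ} [Fact r.Prime] (hm : 0 < m) (hp : p.Prime)
    (hn : 0 < n) (hq : q = p ^ n) (hqr : Nat.Coprime q r)
    {K E : Type*} [Field K] [Fintype K] [DecidableEq K] [Algebra (ZMod r) K]
    (hK : Fintype.card K = r ^ m)
    [Field E] [CharP E p] [IsAlgClosed E]
    (ζ : E) (hζ : IsPrimitiveRoot ζ r)
    (φ : MulChar K E) (v : E) :
    let ρ : K → E := fun y => if y = 0 then v else φ y
    let P : Matrix K K E := Matrix.of fun i j => ρ (j - i)
    let η : K → K → E := fun a x => ζ ^ (Algebra.trace (ZMod r) K (a * x)).val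
    let g : K → E := fun a => ∑ x ∈ univ \ {0}, φ x * ζ ^ (Algebra.trace (ZMod r) K (a * x)).val
    let lam : K → E := fun a => v ^ 2 + (1 + φ (-1)) * v * g a + φ (-1) * (g a) ^ 2
    (∀ a : K, (P * P.transpose).mulVec (η a) = lam a • η a) ∧
      (∀ μ : E, (P * P.transpose).charpoly.IsRoot μ → ∃ a : K, μ = lam a) :=
  eigenvalues_PPT_general hp hn hq hqr hK ζ hζ φ v
end

section
/- Let C be an [n,k] linear code over F_q with generator matrix G = [I_k | P]. Then C is LCD (i.e., C ∩ C^⊥ = {0}) if and only if the matrix I_k + P P^T is nonsingular. -/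
/-- The dual code of a linear code `C ⊆ F^ι` with respect to the standard
(Euclidean) inner product. -/
def dualCode {F : Type*} [Field F] {ι : Type*} [Fintype ι]
    (C : Submodule F (ι → F)) : Submodule F (ι → F) where
  carrier := {v | ∀ c ∈ C, dotProduct c v = 0}
  add_mem' := by
    intro a b ha hb c hc
    simp [dotProduct_add, ha c hc, hb c hc]
  zero_mem' := by
    intro c hc
    simp
  smul_mem' := by
    intro t a ha c hc
    simp [dotProduct_smul, ha c hc]

/-!
For a generator matrix `G` with independent rows, the codewords are the vectors `x ᵥ* G`, and
such a word lies in the dual code exactly when `G *ᵥ (x ᵥ* G) = (G * Gᵀ) *ᵥ x` vanishes. Hence the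
hull is trivial iff `G * Gᵀ` has trivial kernel, and for `G = [I | P]` one has
`G * Gᵀ = I + P * Pᵀ`.
-/

open Submodule Set

lemma mem_dualCode_span_iff {F ι : Type*} [Field F] [Fintype ι] (s : Set (ι → F)) (v : ι → F) :
    v ∈ dualCode (span F s) ↔ ∀ c ∈ s, c ⬝ᵥ v = 0 := by
  refine ⟨fun h c hc => h c (subset_span hc), fun h c hc => ?_⟩
  induction hc using span_induction with
  | mem c hc => exact h c hc
  | zero => exact zero_dotProduct v
  | add a b _ _ ha hb => rw [add_dotProduct, ha, hb, add_zero]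
  | smul t a _ ha => rw [smul_dotProduct, ha, smul_zero]

namespace Matrix

variable {F m n : Type*} [Field F]

lemma mem_dualCode_span_range_row_iff [Fintype n] (G : Matrix m n F) (v : n → F) :
    v ∈ dualCode (span F (range G.row)) ↔ G *ᵥ v = 0 := by
  rw [mem_dualCode_span_iff, forall_mem_range, funext_iff]
  rfl

lemma mem_span_range_row_iff {R : Type*} [Semiring R] [Fintype m] {G : Matrix m n R}
    {c : n → R} : c ∈ span R (range G.row) ↔ ∃ x, x ᵥ* G = c := by
  rw [← range_vecMulLinear]
  rfl

theorem span_range_row_inf_dualCode_eq_bot_iff [Fintype m] [Fintype n] [DecidableEq m]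
    (G : Matrix m n F) (hG : Function.Injective G.vecMul) :
    span F (range G.row) ⊓ dualCode (span F (range G.row)) = ⊥ ↔ IsUnit (G * Gᵀ).det := by
  have hcodeword (x : m → F) : G *ᵥ (x ᵥ* G) = (G * Gᵀ) *ᵥ x := by
    rw [← mulVec_transpose, mulVec_mulVec]
  rw [← isUnit_iff_isUnit_det, ← mulVec_injective_iff_isUnit, ← coe_mulVecLin,
    ← LinearMap.ker_eq_bot, ker_mulVecLin_eq_bot_iff, Submodule.eq_bot_iff]
  constructor
  · intro h x hx
    have hhull : x ᵥ* G ∈ span F (range G.row) ⊓ dualCode (span F (range G.row)) :=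
      ⟨mem_span_range_row_iff.2 ⟨x, rfl⟩,
        (mem_dualCode_span_range_row_iff G _).2 (by rw [hcodeword, hx])⟩
    exact hG ((h _ hhull).trans (zero_vecMul G).symm)
  · rintro h c ⟨hcode, hdual⟩
    obtain ⟨x, rfl⟩ := mem_span_range_row_iff.1 hcode
    rw [SetLike.mem_coe, mem_dualCode_span_range_row_iff, hcodeword] at hdual
    rw [h x hdual, zero_vecMul]

section FromColsOne

variable {R m l : Type*} [Semiring R] [Fintype m] [DecidableEq m]

lemma vecMul_fromCols_one_injective (P : Matrix m l R) :
    Function.Injective (fromCols (1 : Matrix m m R) P).vecMul := fun x y hxy => by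
  simpa using congrArg (fun v => v ∘ Sum.inl) hxy

lemma fromCols_one_mul_transpose [Fintype l] (P : Matrix m l R) :
    fromCols (1 : Matrix m m R) P * (fromCols (1 : Matrix m m R) P)ᵀ = 1 + P * Pᵀ := by
  rw [transpose_fromCols, fromCols_mul_fromRows, transpose_one, mul_one]

end FromColsOne

end Matrix

theorem lcd_iff_nonsingular_general {F : Type*} [Field F] {k l : ℕ}
    (P : Matrix (Fin k) (Fin l) F) :
    let G := Matrix.fromCols (1 : Matrix (Fin k) (Fin k) F) P
    let C := Submodule.span F (Set.range fun i => G i)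
    C ⊓ dualCode C = ⊥ ↔ IsUnit (1 + P * P.transpose).det := by
  intro G C
  rw [← Matrix.fromCols_one_mul_transpose]
  exact G.span_range_row_inf_dualCode_eq_bot_iff (Matrix.vecMul_fromCols_one_injective P)

/-- a linear `[n, k]` code `C` over `F_q` with generator matrix
`G = [I_k | P]` is LCD (`C ∩ C^⊥ = 0`) iff `I_k + P Pᵀ` is nonsingular. -/
theorem lcd_iff_nonsingular {F : Type*} [Field F] [Fintype F] {k l : ℕ}
    (P : Matrix (Fin k) (Fin l) F) :
    let G := Matrix.fromCols (1 : Matrix (Fin k) (Fin k) F) P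
    let C := Submodule.span F (Set.range fun i => G i)
    C ⊓ dualCode C = ⊥ ↔ IsUnit (1 + P * P.transpose).det :=
  lcd_iff_nonsingular_general P
end

section
/- Let C be an [n,k] linear code over F_q with generator matrix G = [I_k | P]. If the matrix P P^T has eigenvalue −1 with algebraic multiplicity 1, then the hull C ∩ C^⊥ has dimension 1. -/
/-!
The code is the image of `c ↦ c G`, which is injective because `G` contains the identity block.
A codeword `c G` is orthogonal to every row of `G` iff `G Gᵀ c = 0`, and `G Gᵀ = 1 + P Pᵀ`, so
the hull is isomorphic to the `-1`-eigenspace of `P Pᵀ`. Its dimension is at least one since `-1`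
is a root of the characteristic polynomial, and at most the algebraic multiplicity, which is one.
-/

open Matrix Module

theorem Module.End.finrank_eigenspace_eq_one_of_rootMultiplicity_eq_one {K V : Type*} [Field K]
    [AddCommGroup V] [Module K V] [FiniteDimensional K V] (f : End K V) (μ : K)
    (h : f.charpoly.rootMultiplicity μ = 1) : finrank K (f.eigenspace μ) = 1 := by
  have hμ : f.HasEigenvalue μ := by
    rw [hasEigenvalue_iff_isRoot_charpoly,
      ← Polynomial.rootMultiplicity_pos f.charpoly_monic.ne_zero, h]
    exact one_pos
  have : Nontrivial (f.eigenspace μ) := Submodule.nontrivial_iff_ne_bot.mpr hμ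
  exact le_antisymm (h ▸ LinearMap.finrank_eigenspace_le f μ) finrank_pos

theorem Matrix.ker_mulVecLin_one_add_eq_eigenspace {R m : Type*} [CommRing R] [Fintype m]
    [DecidableEq m] (A : Matrix m m R) :
    LinearMap.ker (1 + A).mulVecLin = Module.End.eigenspace A.mulVecLin (-1) := by
  ext v
  rw [LinearMap.mem_ker, Module.End.mem_eigenspace_iff, mulVecLin_apply, mulVecLin_apply,
    add_mulVec, one_mulVec, neg_one_smul, add_eq_zero_iff_neg_eq, eq_comm]

section Hull

variable {F ι n : Type*} [Field F] [Fintype ι] [Fintype n]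

omit [Fintype ι] in
theorem mem_dualCode_span_rows_iff (G : Matrix ι n F) (v : n → F) :
    v ∈ dualCode (Submodule.span F (Set.range G.row)) ↔ G *ᵥ v = 0 := by
  refine ⟨fun hv => funext fun i => hv (G i) (Submodule.subset_span ⟨i, rfl⟩),
    fun hv c hc => ?_⟩
  induction hc using Submodule.span_induction with
  | mem _ hx => obtain ⟨i, rfl⟩ := hx; exact congrFun hv i
  | zero => exact zero_dotProduct v
  | add _ _ _ _ h₁ h₂ => rw [add_dotProduct, h₁, h₂, add_zero]
  | smul _ _ _ h => rw [smul_dotProduct, h, smul_zero]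

theorem span_rows_inf_dualCode_eq_map (G : Matrix ι n F) :
    Submodule.span F (Set.range G.row) ⊓ dualCode (Submodule.span F (Set.range G.row)) =
      (LinearMap.ker (G * Gᵀ).mulVecLin).map G.vecMulLinear := by
  rw [← range_vecMulLinear]
  ext x
  simp only [Submodule.mem_inf, Submodule.mem_map, LinearMap.mem_range, LinearMap.mem_ker,
    mulVecLin_apply, vecMulLinear_apply]
  constructor
  · rintro ⟨⟨c, rfl⟩, hx⟩
    rw [range_vecMulLinear, mem_dualCode_span_rows_iff, mulVec_vecMul] at hx
    exact ⟨c, hx, rfl⟩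
  · rintro ⟨c, hc, rfl⟩
    rw [range_vecMulLinear, mem_dualCode_span_rows_iff, mulVec_vecMul]
    exact ⟨⟨c, rfl⟩, hc⟩

theorem finrank_span_rows_inf_dualCode (G : Matrix ι n F) (hG : Function.Injective G.vecMul) :
    finrank F ↥(Submodule.span F (Set.range G.row) ⊓
        dualCode (Submodule.span F (Set.range G.row))) =
      finrank F (LinearMap.ker (G * Gᵀ).mulVecLin) := by
  rw [span_rows_inf_dualCode_eq_map]
  exact (Submodule.equivMapOfInjective G.vecMulLinear hG _).finrank_eq.symm

end Hull

theorem Matrix.fromCols_one_mul_transpose_s14 {R m l : Type*} [Semiring R] [Fintype m] [Fintype l]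
    [DecidableEq m] (P : Matrix m l R) :
    fromCols (1 : Matrix m m R) P * (fromCols (1 : Matrix m m R) P)ᵀ = 1 + P * Pᵀ := by
  rw [transpose_fromCols, transpose_one, fromCols_mul_fromRows, one_mul]

theorem Matrix.vecMul_fromCols_one_injective_s14 {R m l : Type*} [Semiring R] [Fintype m]
    [DecidableEq m] (P : Matrix m l R) :
    Function.Injective (fromCols (1 : Matrix m m R) P).vecMul := by
  intro a b hab
  simpa [vecMul_fromCols] using congrArg (fun v => v ∘ Sum.inl) hab

theorem one_dim_hull_of_multiplicity_one_general {F : Type*} [Field F] {k l : ℕ}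
    (P : Matrix (Fin k) (Fin l) F)
    (h : (P * P.transpose).charpoly.rootMultiplicity (-1) = 1) :
    let G := Matrix.fromCols (1 : Matrix (Fin k) (Fin k) F) P
    let C := Submodule.span F (Set.range fun i => G i)
    Module.finrank F ↥(C ⊓ dualCode C) = 1 := by
  intro G C
  have hull := finrank_span_rows_inf_dualCode G (vecMul_fromCols_one_injective_s14 P)
  rw [fromCols_one_mul_transpose_s14, ker_mulVecLin_one_add_eq_eigenspace] at hull
  exact hull.trans <| Module.End.finrank_eigenspace_eq_one_of_rootMultiplicity_eq_one _ _
    (by rwa [charpoly_mulVecLin])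

/-- if `P Pᵀ` has `-1` as an eigenvalue with algebraic multiplicity one
(i.e. `-1` is a root of multiplicity one of its characteristic polynomial), then the
code with generator matrix `[I_k | P]` has one-dimensional hull. -/
theorem one_dim_hull_of_multiplicity_one {F : Type*} [Field F] [Fintype F] {k l : ℕ}
    (P : Matrix (Fin k) (Fin l) F)
    (h : (P * P.transpose).charpoly.rootMultiplicity (-1) = 1) :
    let G := Matrix.fromCols (1 : Matrix (Fin k) (Fin k) F) P
    let C := Submodule.span F (Set.range fun i => G i)
    Module.finrank F ↥(C ⊓ dualCode C) = 1 :=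
  one_dim_hull_of_multiplicity_one_general P h
end

section
/- Suppose N | (r^m − 1), N | (q − 1), gcd(p,r) = 1, there exists a positive integer s with N | (p^s − 1), and φ(p^{2s}) ≠ 1 where φ is the order-N multiplicative homomorphism from F_{r^m}^* to F_q^* defined by φ(α^k) = u^k (α a primitive element of F_{r^m}, u a fixed element of order N in F_q^*). Then for all a ∈ F_{r^m}^*, φ(−1)·(g(φ, χ_a))² ≠ −1; consequently the code with generator matrix [I_{r^m} | P] (with ρ(0)=0) is a [2r^m, r^m] LCD code over F_q. -/
/-!
Since `Pᵀ = φ(-1) P`, the Gram matrix of `[I | P]` is `I + φ(-1) P²`. The additive characters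
`χ_a` diagonalise `P`, with eigenvalues the Gauss sums `g(φ, χ_a)`, so
`det (I + φ(-1) P²) = ∏ₐ (1 + φ(-1) g(φ, χ_a)²)`. No factor vanishes: the Frobenius
`x ↦ x ^ p ^ s` fixes `φ` and sends `g(φ, χ_a)` to `φ(p^s)⁻¹ g(φ, χ_a)`, so
`φ(-1) g(φ, χ_a)² = -1` would force `φ(p^{2s}) = 1`. A nonsingular Gram matrix makes the
rows of `[I | P]` independent and the code LCD.
-/

open Finset

open Matrix

theorem pow_eq_self_of_orderOf_dvd_sub_one {M : Type*} [Monoid M] {x : M} {n : ℕ} (hn : n ≠ 0)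
    (h : orderOf x ∣ n - 1) : x ^ n = x := by
  rw [← Nat.sub_add_cancel (Nat.one_le_iff_ne_zero.mpr hn), pow_succ,
    orderOf_dvd_iff_pow_eq_one.mp h, one_mul]

namespace MulChar

theorem pow_eq_self_of_apply_generator {R R' : Type*} [CommMonoid R] [CommMonoidWithZero R']
    (χ : MulChar R R') {α : Rˣ} (hα : ∀ x : Rˣ, x ∈ Subgroup.zpowers α) {n : ℕ}
    (h : χ α ^ n = χ α) : χ ^ n = χ := by
  have hgen : (χ ^ n).toUnitHom α = χ.toUnitHom α := by
    ext
    rw [coe_toUnitHom, coe_toUnitHom, pow_apply_coe, h]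
  refine MulChar.ext fun x => ?_
  obtain ⟨k, rfl⟩ := hα x
  rw [← coe_toUnitHom, ← coe_toUnitHom, map_zpow, map_zpow, hgen]

theorem transpose_of_sub {R R' : Type*} [CommRing R] [CommMonoidWithZero R'] (χ : MulChar R R') :
    (of fun i j : R => χ (j - i))ᵀ = χ (-1) • of fun i j : R => χ (j - i) := by
  ext i j
  rw [transpose_apply, Matrix.smul_apply, of_apply, of_apply, smul_eq_mul, ← map_mul]
  ring_nf

end MulChar

section GaussSum

variable {R R' : Type*} [CommRing R] [Fintype R] [CommRing R']

theorem gaussSum_pow_char_pow (p : ℕ) [Fact p.Prime] [CharP R' p] (χ : MulChar R R')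
    (ψ : AddChar R R') (n : ℕ) :
    gaussSum χ ψ ^ p ^ n = gaussSum (χ ^ p ^ n) (ψ ^ p ^ n) := by
  induction n with
  | zero => simp
  | succ n ih => rw [pow_succ, pow_mul, ih, gaussSum_frob, ← pow_mul, ← pow_mul]

theorem apply_neg_one_mul_gaussSum_sq_ne_neg_one (p : ℕ) [Fact p.Prime] [CharP R' p]
    {χ : MulChar R R'} (ψ : AddChar R R') {n : ℕ} (hp : IsUnit (p : R))
    (hχ : χ ^ p ^ n = χ) (hχp : χ ((p : R) ^ (2 * n)) ≠ 1) :
    χ (-1) * gaussSum χ ψ ^ 2 ≠ -1 := by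
  intro h
  set c : Rˣ := hp.unit ^ n
  have hc : (c : R) = (p : R) ^ n := by simp [c]
  set g' := gaussSum χ (ψ.mulShift c)
  have hfrob : gaussSum χ ψ ^ p ^ n = g' := by
    rw [gaussSum_pow_char_pow, hχ, AddChar.pow_mulShift, Nat.cast_pow, ← hc]
  have hneg : χ (-1) ^ p ^ n = χ (-1) := by
    rw [← MulChar.pow_apply' χ (pow_ne_zero n (Fact.out : p.Prime).ne_zero), hχ]
  have h' : χ (-1) * g' ^ 2 = -1 := by
    have := congrArg (· ^ p ^ n) h
    simp only [mul_pow, neg_one_pow_char_pow, ← pow_mul, mul_comm 2 (p ^ n)] at this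
    rwa [pow_mul, hfrob, hneg] at this
  have hsq : χ c ^ 2 * -1 = -1 :=
    calc χ c ^ 2 * -1 = χ (-1) * (χ c * g') ^ 2 := by rw [← h']; ring
      _ = -1 := by rw [gaussSum_mulShift, h]
  apply hχp
  rw [pow_mul', map_pow, ← hc]
  simpa using hsq

end GaussSum

theorem Matrix.det_one_add_smul_mul_self_of_mul_eq_mul_diagonal {n E : Type*} [Fintype n]
    [DecidableEq n] [CommRing E] [IsDomain E] {A W : Matrix n n E} {d : n → E}
    (hW : W.det ≠ 0) (h : A * W = W * diagonal d) (c : E) :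
    (1 + c • (A * A)).det = ∏ i, (1 + c * d i ^ 2) := by
  have hconj : (1 + c • (A * A)) * W = W * diagonal (fun i => 1 + c * d i ^ 2) := by
    have hd : diagonal (fun i => 1 + c * d i ^ 2) = 1 + c • (diagonal d * diagonal d) := by
      rw [diagonal_mul_diagonal, ← diagonal_one, ← diagonal_smul, diagonal_add]
      simp [sq]
    rw [hd, add_mul, mul_add, one_mul, mul_one, Matrix.smul_mul, Matrix.mul_smul, mul_assoc, h,
      ← mul_assoc, h, mul_assoc]
  have := congrArg det hconj
  rw [det_mul, det_mul, det_diagonal, mul_comm W.det] at this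
  exact mul_right_cancel₀ hW this

theorem RingHom.mapMatrix_one_add_smul_mul_self {n R S : Type*} [Fintype n] [DecidableEq n]
    [CommRing R] [CommRing S] (f : R →+* S) (c : R) (A : Matrix n n R) :
    f.mapMatrix (1 + c • (A * A)) = 1 + f c • (A.map f * A.map f) := by
  ext i j
  simp [Matrix.one_apply, Matrix.mul_apply, apply_ite f, mul_sum]

section CharacterMatrix

variable {R E : Type*} [CommRing R] [Fintype R] [CommRing E]

def AddChar.charMatrix (ψ : AddChar R E) : Matrix R R E := of fun x a => ψ (a * x)

variable [DecidableEq R]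

theorem AddChar.mul_charMatrix_eq_charMatrix_mul_diagonal (ψ : AddChar R E) (v : R → E) :
    of (fun i j => v (j - i)) * ψ.charMatrix =
      ψ.charMatrix * diagonal (fun a => ∑ x, v x * ψ (a * x)) := by
  ext i a
  rw [mul_diagonal, Matrix.mul_apply, charMatrix, of_apply, mul_sum]
  refine Fintype.sum_equiv (Equiv.subRight i) _ _ fun j => ?_
  simp only [of_apply, Equiv.subRight_apply]
  rw [show a * j = a * (j - i) + a * i by ring, AddChar.map_add_eq_mul]
  ring

variable [IsDomain E] {ψ : AddChar R E}

theorem AddChar.charMatrix_mul_charMatrix_inv (hψ : ψ.IsPrimitive) :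
    ψ.charMatrix * ψ⁻¹.charMatrix = (Fintype.card R : E) • 1 := by
  ext x y
  have hterm : ∀ a, ψ.charMatrix x a * ψ⁻¹.charMatrix a y = ψ (a * (x - y)) := by
    intro a
    simp only [charMatrix, of_apply, AddChar.inv_apply, ← AddChar.map_add_eq_mul]
    ring_nf
  rw [Matrix.mul_apply, Fintype.sum_congr _ _ hterm, AddChar.sum_mulShift _ hψ]
  simp [Matrix.one_apply, sub_eq_zero]

theorem AddChar.det_charMatrix_ne_zero (hψ : ψ.IsPrimitive) (hR : (Fintype.card R : E) ≠ 0) :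
    ψ.charMatrix.det ≠ 0 := by
  intro h
  have := congrArg det (charMatrix_mul_charMatrix_inv hψ)
  rw [det_mul, h, zero_mul, det_smul, det_one, mul_one] at this
  exact pow_ne_zero _ hR this.symm

theorem MulChar.det_one_add_smul_mul_self_eq_prod_gaussSum (χ : MulChar R E)
    (hψ : ψ.IsPrimitive) (hR : (Fintype.card R : E) ≠ 0) (c : E) :
    (1 + c • ((of fun i j => χ (j - i)) * of fun i j => χ (j - i))).det =
      ∏ a, (1 + c * gaussSum χ (ψ.mulShift a) ^ 2) :=
  det_one_add_smul_mul_self_of_mul_eq_mul_diagonal (ψ.det_charMatrix_ne_zero hψ hR)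
    (ψ.mul_charMatrix_eq_charMatrix_mul_diagonal χ) c

end CharacterMatrix

section TraceChar

variable {r : ℕ} [Fact r.Prime] {K E : Type*} [Field K] [Fintype K] [Algebra (ZMod r) K]
  [Field E] {ζ : E}

/-- The character `χ_1 : x ↦ ζ ^ Tr x` of the paper; its shift `mulShift a` is `χ_a`. -/
noncomputable def traceAddChar (hζ : IsPrimitiveRoot ζ r) : AddChar K E :=
  (AddChar.zmodChar r hζ.pow_eq_one).compAddMonoidHom (Algebra.trace (ZMod r) K).toAddMonoidHom

theorem isPrimitive_traceAddChar (hζ : IsPrimitiveRoot ζ r) :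
    (traceAddChar hζ : AddChar K E).IsPrimitive := by
  refine AddChar.IsPrimitive.of_ne_one fun h => ?_
  obtain ⟨z, hz⟩ : ∃ z : K, Algebra.trace (ZMod r) K z ≠ 0 := by
    by_contra! hcon
    exact Algebra.trace_ne_zero (ZMod r) K (LinearMap.ext hcon)
  refine hz (((AddChar.zmodChar_primitive_of_primitive_root r hζ).zmod_char_eq_one_iff r _).mp ?_)
  exact DFunLike.congr_fun h z

end TraceChar

section Code

variable {F ι κ : Type*} [Field F] [Fintype ι] [DecidableEq ι] [Fintype κ] {G : Matrix ι κ F}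

theorem Matrix.linearIndependent_rows_of_det_mul_transpose_ne_zero (hG : (G * Gᵀ).det ≠ 0) :
    LinearIndependent F fun i => G i := by
  rw [Fintype.linearIndependent_iff]
  intro c hc
  rw [← vecMul_eq_sum] at hc
  refine congrFun (eq_zero_of_vecMul_eq_zero hG ?_)
  rw [← vecMul_vecMul, hc, zero_vecMul]

theorem Matrix.span_rows_inf_dualCode_eq_bot (hG : (G * Gᵀ).det ≠ 0) :
    Submodule.span F (Set.range fun i => G i) ⊓
      dualCode (Submodule.span F (Set.range fun i => G i)) = ⊥ := by
  rw [eq_bot_iff]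
  rintro v ⟨hvC, hvdual⟩
  obtain ⟨c, rfl⟩ := (Submodule.mem_span_range_iff_exists_fun F).mp hvC
  rw [← vecMul_eq_sum] at hvdual ⊢
  have hGv : G *ᵥ (c ᵥ* G) = 0 := funext fun i => hvdual _ (Submodule.subset_span ⟨i, rfl⟩)
  rw [← mulVec_transpose, mulVec_mulVec] at hGv
  rw [← mulVec_transpose, eq_zero_of_mulVec_eq_zero hG hGv, mulVec_zero]
  exact Submodule.zero_mem _

end Code

theorem lcd_construction_A_case1_general {r m p N : ℕ} [Fact r.Prime]
    (hp : p.Prime) (hpr : Nat.Coprime p r)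
    {K F E : Type*} [Field K] [Fintype K] [DecidableEq K] [Algebra (ZMod r) K]
    (hK : Fintype.card K = r ^ m)
    [Field F]
    [Field E] [CharP E p] [Algebra F E]
    (ζ : E) (hζ : IsPrimitiveRoot ζ r)
    (α : Kˣ) (hα : ∀ x : Kˣ, x ∈ Subgroup.zpowers α)
    (u : F) (hu : orderOf u = N)
    (φ : MulChar K F) (hφ : ∀ k : ℕ, φ ((α ^ k : Kˣ) : K) = u ^ k)
    (s : ℕ) (hNs : N ∣ p ^ s - 1)
    (hp2s : φ ((p : K) ^ (2 * s)) ≠ 1) :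
    let g : K → E := fun a =>
      ∑ x ∈ univ \ {0},
        algebraMap F E (φ x) * ζ ^ (Algebra.trace (ZMod r) K (a * x)).val
    let P : Matrix K K F := Matrix.of fun i j => if j = i then 0 else φ (j - i)
    let G := Matrix.fromCols (1 : Matrix K K F) P
    let C := Submodule.span F (Set.range fun i => G i)
    (∀ a : K, a ≠ 0 → algebraMap F E (φ (-1)) * (g a) ^ 2 ≠ -1) ∧
      C ⊓ dualCode C = ⊥ ∧ Module.finrank F C = r ^ m := by
  intro g P G C
  have : Fact p.Prime := ⟨hp⟩
  set f := algebraMap F E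
  set χ : MulChar K E := φ.ringHomComp f
  have hg (a : K) : g a = gaussSum χ ((traceAddChar hζ).mulShift a) :=
    sum_subset (subset_univ _) fun x _ hx => by simp [show x = 0 by simpa using hx, φ.map_zero]
  have hφ_frob : φ ^ p ^ s = φ := φ.pow_eq_self_of_apply_generator hα <| by
    rw [show φ α = u by simpa using hφ 1]
    exact pow_eq_self_of_orderOf_dvd_sub_one (pow_ne_zero s hp.ne_zero) (hu ▸ hNs)
  have hgauss (a : K) : χ (-1) * gaussSum χ ((traceAddChar hζ).mulShift a) ^ 2 ≠ -1 := by
    refine apply_neg_one_mul_gaussSum_sq_ne_neg_one p _ (n := s) ?_ ?_ ?_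
    · simpa using (ZMod.unitOfCoprime p hpr).isUnit.map (algebraMap (ZMod r) K)
    · rw [MulChar.ringHomComp_pow, hφ_frob]
    · simpa [χ] using f.injective.ne hp2s
  have hP : P = of fun i j => φ (j - i) := by
    ext i j
    by_cases hij : j = i <;> simp [P, hij, φ.map_zero]
  have hGram : G * Gᵀ = 1 + φ (-1) • (P * P) := by
    rw [transpose_fromCols, fromCols_mul_fromRows, transpose_one, mul_one, hP,
      φ.transpose_of_sub, Matrix.mul_smul]
  have hcard : (Fintype.card K : E) ≠ 0 := by
    rw [hK, Ne, CharP.cast_eq_zero_iff E p]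
    exact hp.coprime_iff_not_dvd.mp (hpr.pow_right m)
  have hdet : (G * Gᵀ).det ≠ 0 := by
    rw [hGram, hP, ← f.injective.ne_iff, map_zero, RingHom.map_det,
      f.mapMatrix_one_add_smul_mul_self]
    refine (χ.det_one_add_smul_mul_self_eq_prod_gaussSum (isPrimitive_traceAddChar hζ) hcard
      _).trans_ne ?_
    exact prod_ne_zero_iff.mpr fun a _ h => hgauss a (eq_neg_of_add_eq_zero_right h)
  refine ⟨fun a _ => hg a ▸ hgauss a, span_rows_inf_dualCode_eq_bot hdet, ?_⟩
  rw [finrank_span_eq_card (linearIndependent_rows_of_det_mul_transpose_ne_zero hdet), hK]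

/-- if `N ∣ r^m - 1`, `N ∣ q - 1`, `gcd (p, r) = 1`, `N ∣ p^s - 1` for some
`s ≥ 1` and `φ (p^{2s}) ≠ 1`, where `φ` is the order-`N` multiplicative character of
`F_{r^m}` determined by `φ (α^k) = u^k`, then `φ(-1) g(φ, χ_a)² ≠ -1` for every
`a ≠ 0`, and the code with generator matrix `[I | P]` (diagonal of `P` zero) is a
`[2 r^m, r^m]` LCD code over `F_q`. -/
theorem lcd_construction_A_case1 {r m p e q N : ℕ} [Fact r.Prime] (hm : 0 < m)
    (hp : p.Prime) (he : 0 < e) (hq : q = p ^ e) (hpr : Nat.Coprime p r)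
    (hN : 1 < N) (hNr : N ∣ r ^ m - 1) (hNq : N ∣ q - 1)
    {K F E : Type*} [Field K] [Fintype K] [DecidableEq K] [Algebra (ZMod r) K]
    (hK : Fintype.card K = r ^ m)
    [Field F] [Fintype F] [CharP F p] (hF : Fintype.card F = q)
    [Field E] [CharP E p] [IsAlgClosed E] [Algebra F E]
    (ζ : E) (hζ : IsPrimitiveRoot ζ r)
    (α : Kˣ) (hα : ∀ x : Kˣ, x ∈ Subgroup.zpowers α)
    (u : F) (hu : orderOf u = N)
    (φ : MulChar K F) (hφ : ∀ k : ℕ, φ ((α ^ k : Kˣ) : K) = u ^ k)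
    (s : ℕ) (hs : 0 < s) (hNs : N ∣ p ^ s - 1)
    (hp2s : φ ((p : K) ^ (2 * s)) ≠ 1) :
    let g : K → E := fun a =>
      ∑ x ∈ univ \ {0},
        algebraMap F E (φ x) * ζ ^ (Algebra.trace (ZMod r) K (a * x)).val
    let P : Matrix K K F := Matrix.of fun i j => if j = i then 0 else φ (j - i)
    let G := Matrix.fromCols (1 : Matrix K K F) P
    let C := Submodule.span F (Set.range fun i => G i)
    (∀ a : K, a ≠ 0 → algebraMap F E (φ (-1)) * (g a) ^ 2 ≠ -1) ∧
      C ⊓ dualCode C = ⊥ ∧ Module.finrank F C = r ^ m :=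
  lcd_construction_A_case1_general hp hpr hK ζ hζ α hα u hu φ hφ s hNs hp2s
end
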